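/- Let δ, λ be reals with λ ≥ 1 and (λ/(λ+1))^2 < δ ≤ 1, and let N be the unique positive integer with N - 1 ≤ 1/(√δ·(λ+1)/λ - 1) < N. If a real number α satisfies α ≥ √δ·(λ+1)/(2λ), then for every integer m ≥ 1, (2(m-1)+1)·α - 1 > m - 3/2 + (2(m-1)+1)/(2N). -/

import Mathlib

/-!
Put `s = √δ (l + 1) / l`. The bound `(l / (l + 1))² < δ` gives `s > 1`, and `1 / (s - 1) < N` then
gives `s > 1 + 1 / N`, so `α ≥ s / 2 > 1 / 2 + 1 / (2N)`. Multiplying by `2m - 1 ≥ 1` yields the claim,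
whose right-hand side is `(2m - 1)(1 / 2 + 1 / (2N)) - 1`.
-/

lemma one_lt_sqrt_mul_add_one_div {δ l : ℝ} (hl : 0 < l) (hδ : (l / (l + 1)) ^ 2 < δ) :
    1 < Real.sqrt δ * (l + 1) / l := by
  have hl1 : 0 < l + 1 := by linarith
  have hsqrt : l / (l + 1) < Real.sqrt δ := Real.lt_sqrt (by positivity) |>.mpr hδ
  rw [lt_div_iff₀ hl, one_mul]
  calc l = l / (l + 1) * (l + 1) := (div_mul_cancel₀ l hl1.ne').symm
    _ < Real.sqrt δ * (l + 1) := mul_lt_mul_of_pos_right hsqrt hl1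

lemma one_add_inv_lt_of_one_div_sub_one_lt {s N : ℝ} (hs : 1 < s) (hN : 1 / (s - 1) < N) :
    1 + 1 / N < s := by
  have hs1 : 0 < s - 1 := sub_pos.mpr hs
  have hN0 : 0 < N := (one_div_pos.mpr hs1).trans hN
  have : 1 / N < s - 1 := (one_div_lt hs1 hN0).mp hN
  linarith

lemma odd_mul_sub_one_gt {α N : ℝ} (hα : 1 / 2 + 1 / (2 * N) < α) (m : ℕ) (hm : 1 ≤ m) :
    (2 * ((m : ℝ) - 1) + 1) * α - 1 > (m : ℝ) - 3 / 2 + (2 * ((m : ℝ) - 1) + 1) / (2 * N) := by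
  have hk : 0 < 2 * ((m : ℝ) - 1) + 1 := by
    have : (1 : ℝ) ≤ m := by exact_mod_cast hm
    linarith
  calc (m : ℝ) - 3 / 2 + (2 * ((m : ℝ) - 1) + 1) / (2 * N)
      = (2 * ((m : ℝ) - 1) + 1) * (1 / 2 + 1 / (2 * N)) - 1 := by ring
    _ < (2 * ((m : ℝ) - 1) + 1) * α - 1 := by gcongr

theorem stmt_6_general (δ l : ℝ) (hl : 1 ≤ l) (hδ1 : (l / (l + 1)) ^ 2 < δ)
    (N : ℕ)
    (hN2 : 1 / (Real.sqrt δ * (l + 1) / l - 1) < N)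
    (α : ℝ) (hα : α ≥ Real.sqrt δ * (l + 1) / (2 * l))
    (m : ℕ) (hm : 1 ≤ m) :
    (2 * ((m : ℝ) - 1) + 1) * α - 1
      > (m : ℝ) - 3 / 2 + (2 * ((m : ℝ) - 1) + 1) / (2 * N) := by
  set s := Real.sqrt δ * (l + 1) / l
  have hs : 1 < s := one_lt_sqrt_mul_add_one_div (by linarith) hδ1
  have hsN : 1 + 1 / (N : ℝ) < s := one_add_inv_lt_of_one_div_sub_one_lt hs hN2
  have hαs : s / 2 ≤ α := by
    have : Real.sqrt δ * (l + 1) / (2 * l) = s / 2 := by ring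
    linarith
  refine odd_mul_sub_one_gt ?_ m hm
  calc 1 / 2 + 1 / (2 * (N : ℝ)) = (1 + 1 / N) / 2 := by ring
    _ < s / 2 := by linarith
    _ ≤ α := hαs

theorem stmt_6 (δ l : ℝ) (hl : 1 ≤ l) (hδ1 : (l / (l + 1)) ^ 2 < δ) (hδ2 : δ ≤ 1)
    (N : ℕ) (hN : 0 < N)
    (hN1 : (N : ℝ) - 1 ≤ 1 / (Real.sqrt δ * (l + 1) / l - 1))
    (hN2 : 1 / (Real.sqrt δ * (l + 1) / l - 1) < N)
    (α : ℝ) (hα : α ≥ Real.sqrt δ * (l + 1) / (2 * l))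
    (m : ℕ) (hm : 1 ≤ m) :
    (2 * ((m : ℝ) - 1) + 1) * α - 1
      > (m : ℝ) - 3 / 2 + (2 * ((m : ℝ) - 1) + 1) / (2 * N) :=
  stmt_6_general δ l hl hδ1 N hN2 α hα m hm
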